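/- arXiv:1009.2518 — 5 statements merged into one kernel-verified Lean document; each statement's English description precedes it below -/
import Mathlib

section
/- For γ real and k > -1, define I_{γ,k}(r) = ∫_{-1}^1 (1-t²)^k (1-2rt+r²)^{-γ/2} dt. If γ < 2k+2, then there is a constant C_{γ,k} such that |I_{γ,k}(r)| ≤ C_{γ,k} for all r in a neighborhood of 1 (r > 0, r ∼ 1). -/
open Real

open MeasureTheory intervalIntegral Set in
private lemma aux_int (a b : ℝ) (ha : -1 < a) (hb : -1 < b) :
    IntervalIntegrable (fun t : ℝ => (1 - t) ^ a * (1 + t) ^ b) volume (-1) 1 := by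
  apply IntervalIntegrable.trans (b := 0)
  · have h1 : IntervalIntegrable (fun t : ℝ => (1 + t) ^ b) volume (-1) 0 := by
      have := (intervalIntegrable_rpow' hb (a := 0) (b := 1)).comp_sub_right (-1)
      norm_num at this
      simpa [sub_neg_eq_add, add_comm] using this
    have hc : ContinuousOn (fun t : ℝ => (1 - t) ^ a) (Set.uIcc (-1 : ℝ) 0) := by
      apply ContinuousOn.rpow_const (by fun_prop)
      intro x hx
      rw [Set.uIcc_of_le (by norm_num)] at hx
      left; have := hx.2; intro hcon; nlinarith [hx.1, hx.2]
    exact h1.continuousOn_mul hc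
  · have h1 : IntervalIntegrable (fun t : ℝ => (1 - t) ^ a) volume 0 1 := by
      have := (intervalIntegrable_rpow' ha (a := 0) (b := 1)).comp_sub_left 1
      norm_num at this
      exact this.symm
    have hc : ContinuousOn (fun t : ℝ => (1 + t) ^ b) (Set.uIcc (0 : ℝ) 1) := by
      apply ContinuousOn.rpow_const (by fun_prop)
      intro x hx
      rw [Set.uIcc_of_le (by norm_num)] at hx
      left; intro hcon; nlinarith [hx.1, hx.2]
    exact h1.mul_continuousOn hc

/-- The kernel `I_{γ,k}(r) = ∫_{-1}^1 (1-t²)^k (1-2rt+r²)^{-γ/2} dt`. -/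
noncomputable def Ikernel (γ k r : ℝ) : ℝ :=
  ∫ t in (-1 : ℝ)..1, (1 - t ^ 2) ^ k * (1 - 2 * r * t + r ^ 2) ^ (-γ / 2)

/-- If `k > -1` and `γ < 2k+2`, the kernel is bounded for `r > 0` near `1`. -/
theorem Ikernel_bounded_of_lt :
    ∀ γ k : ℝ, k > -1 → γ < 2 * k + 2 →
      ∃ C ε : ℝ, 0 < ε ∧ ∀ r : ℝ, 0 < r → |r - 1| < ε → |Ikernel γ k r| ≤ C := by
  intro γ k hk hγ
  set D : ℝ := ((25 : ℝ) / 4) ^ (|γ| / 2) with hD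
  have hD0 : 0 ≤ D := Real.rpow_nonneg (by norm_num) _
  set h : ℝ → ℝ := fun t =>
    (1 - t) ^ (k - γ / 2) * (1 + t) ^ k + D * ((1 - t) ^ k * (1 + t) ^ k) with hh
  have hint : IntervalIntegrable h MeasureTheory.volume (-1) 1 :=
    (aux_int _ _ (by linarith) hk).add ((aux_int _ _ hk hk).const_mul D)
  have hhnn : ∀ t ∈ Set.Icc (-1 : ℝ) 1, 0 ≤ h t := by
    intro t ht
    have h1 : (0:ℝ) ≤ 1 - t := by linarith [ht.2]
    have h2 : (0:ℝ) ≤ 1 + t := by linarith [ht.1]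
    have := Real.rpow_nonneg h1 (k - γ / 2)
    have := Real.rpow_nonneg h2 k
    have := Real.rpow_nonneg h1 k
    positivity
  have hCnn : 0 ≤ ∫ t in (-1:ℝ)..1, h t :=
    intervalIntegral.integral_nonneg (by norm_num) hhnn
  refine ⟨∫ t in (-1:ℝ)..1, h t, 1/2, by norm_num, ?_⟩
  intro r hr hrε
  obtain ⟨hr2, hr1⟩ := abs_sub_lt_iff.mp hrε
  have hr1 : 1/2 < r := by linarith
  have hr2 : r < 3/2 := by linarith
  set f : ℝ → ℝ := fun t => (1 - t ^ 2) ^ k * (1 - 2 * r * t + r ^ 2) ^ (-γ / 2) with hf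
  have key : ∀ t ∈ Set.Ioo (-1 : ℝ) 1, |f t| ≤ h t := by
    intro t ht
    obtain ⟨ht1, ht2⟩ := ht
    have hu : (0:ℝ) < 1 - t := by linarith
    have hv : (0:ℝ) < 1 + t := by linarith
    have hb : (0:ℝ) < 1 - 2 * r * t + r ^ 2 := by nlinarith [sq_nonneg (r - t)]
    have hstep1 : (1 - t ^ 2) ^ k = (1 - t) ^ k * (1 + t) ^ k := by
      rw [show (1 - t ^ 2 : ℝ) = (1 - t) * (1 + t) by ring,
        Real.mul_rpow hu.le hv.le]
    have hstep2 : (1 - 2 * r * t + r ^ 2) ^ (-γ / 2) ≤ (1 - t) ^ (-γ / 2) + D := by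
      rcases le_or_gt 0 γ with hγ0 | hγ0
      · have h1 : 1 - t ≤ 1 - 2 * r * t + r ^ 2 := by nlinarith [sq_nonneg (1 - r)]
        have := Real.rpow_le_rpow_of_nonpos hu h1 (by linarith : -γ / 2 ≤ 0)
        linarith
      · have h1 : 1 - 2 * r * t + r ^ 2 ≤ 25 / 4 := by nlinarith
        have h2 := Real.rpow_le_rpow hb.le h1 (by linarith : 0 ≤ -γ / 2)
        have h3 : ((25:ℝ) / 4) ^ (-γ / 2) = D := by
          rw [hD, abs_of_neg hγ0]
        have h4 := Real.rpow_nonneg hu.le (-γ / 2)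
        linarith
    have hfnn : 0 ≤ f t := by
      have := Real.rpow_nonneg (by nlinarith : (0:ℝ) ≤ 1 - t ^ 2) k
      have := Real.rpow_nonneg hb.le (-γ / 2)
      positivity
    rw [abs_of_nonneg hfnn, hf]
    have hmul : (1 - t ^ 2) ^ k * (1 - 2 * r * t + r ^ 2) ^ (-γ / 2) ≤
        (1 - t) ^ k * (1 + t) ^ k * ((1 - t) ^ (-γ / 2) + D) := by
      rw [hstep1]
      apply mul_le_mul_of_nonneg_left hstep2
      exact mul_nonneg (Real.rpow_nonneg hu.le k) (Real.rpow_nonneg hv.le k)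
    refine hmul.trans ?_
    have hpow : (1 - t) ^ (k - γ / 2) = (1 - t) ^ k * (1 - t) ^ (-γ / 2) := by
      rw [show k - γ / 2 = k + (-γ / 2) by ring, Real.rpow_add hu]
    rw [hh]; simp only; rw [hpow]; ring_nf; exact le_refl _
  have hae : (fun t => |f t|) ≤ᵐ[MeasureTheory.volume.restrict (Set.Icc (-1 : ℝ) 1)] h := by
    have hne1 : ∀ᵐ t : ℝ, t ≠ (1:ℝ) := by
      rw [MeasureTheory.ae_iff]
      simpa using MeasureTheory.measure_singleton (1:ℝ)
    have hne2 : ∀ᵐ t : ℝ, t ≠ (-1:ℝ) := by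
      rw [MeasureTheory.ae_iff]
      simpa using MeasureTheory.measure_singleton (-1:ℝ)
    filter_upwards [MeasureTheory.ae_restrict_mem measurableSet_Icc,
      MeasureTheory.ae_restrict_of_ae hne1, MeasureTheory.ae_restrict_of_ae hne2]
      with t ht h1 h2
    exact key t ⟨ht.1.lt_of_ne' h2, ht.2.lt_of_ne h1⟩
  by_cases hfi : IntervalIntegrable f MeasureTheory.volume (-1) 1
  · calc |Ikernel γ k r| ≤ ∫ t in (-1:ℝ)..1, |f t| :=
          intervalIntegral.abs_integral_le_integral_abs (by norm_num)
      _ ≤ ∫ t in (-1:ℝ)..1, h t :=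
          intervalIntegral.integral_mono_ae_restrict (by norm_num) hfi.abs hint hae
  · rw [Ikernel, intervalIntegral.integral_undef hfi]
    simpa using hCnn
end

section
/- For k > -1 with γ = 2k+2, the integral I_{γ,k}(r) = ∫_{-1}^1 (1-t²)^k (1-2rt+r²)^{-γ/2} dt satisfies the logarithmic bound |I_{2k+2,k}(r)| ≤ C_k log(1/|1-r|) for r near 1, r ≠ 1. -/
open Real

section Aux

open intervalIntegral MeasureTheory Set

private lemma integral_one_sub_rpow (k d : ℝ) (hk : -1 < k) :
    ∫ t in (1 - d : ℝ)..1, (1 - t) ^ k = d ^ (k+1) / (k + 1) := by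
  rw [show (fun t : ℝ => (1 - t) ^ k) = (fun t : ℝ => ((fun x : ℝ => x ^ k) (1 - t))) from rfl,
    integral_comp_sub_left (fun x : ℝ => x ^ k) 1]
  norm_num
  rw [integral_rpow (Or.inl hk), Real.zero_rpow (by linarith)]
  ring

private lemma aux_A_bound (k b : ℝ) (hb1 : 1 ≤ b) (hb2 : b ≤ 2) :
    b ^ k ≤ max 1 (2 ^ k : ℝ) := by
  rcases le_or_gt 0 k with hk0 | hk0
  · exact le_trans (Real.rpow_le_rpow (by linarith) hb2 hk0) (le_max_right _ _)
  · exact le_trans (Real.rpow_le_one_of_one_le_of_nonpos hb1 hk0.le) (le_max_left _ _)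

theorem Ikernel_log_bound_aux (k : ℝ) (hk : k > -1) (r : ℝ) (hr0 : 0 < r)
    (hre : |r - 1| < Real.exp (-1)) (hrne : r ≠ 1) :
    |Ikernel (2 * k + 2) k r| ≤
      (2 * max 1 (2 ^ k : ℝ) / (k + 1) + 2 * max 1 (2 ^ k : ℝ)) * Real.log (1 / |1 - r|) := by
  set A : ℝ := max 1 (2 ^ k : ℝ) with hA
  have hA1 : (1:ℝ) ≤ A := le_max_left _ _
  have hA0 : (0:ℝ) < A := by linarith
  have hk1 : (0:ℝ) < k + 1 := by linarith
  -- basic facts about r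
  have he1 : Real.exp (-1) ≤ 1/2 := by
    rw [Real.exp_neg]
    rw [inv_le_comm₀ (Real.exp_pos 1) (by norm_num)]
    norm_num
    linarith [Real.add_one_le_exp 1]
  have hrabs : |1 - r| < Real.exp (-1) := by rwa [abs_sub_comm]
  have hrne' : (1:ℝ) - r ≠ 0 := sub_ne_zero.mpr (fun h => hrne h.symm)
  have habs0 : 0 < |1 - r| := abs_pos.mpr hrne'
  have hrhalf : (1:ℝ) ≤ 2 * r := by
    have : 1 - r ≤ |1 - r| := le_abs_self _
    linarith
  set δ : ℝ := (1 - r)^2 with hδdef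
  have hδ0 : 0 < δ := by positivity
  have hδabs : δ = |1 - r|^2 := (sq_abs _).symm
  have habs1 : |1 - r| < 1 := lt_trans hrabs (by linarith)
  have hδ1 : δ < 1 := by
    rw [hδabs]
    nlinarith
  set L : ℝ := Real.log (1 / |1 - r|) with hL
  have hL1 : 1 ≤ L := by
    rw [hL, one_div, Real.log_inv]
    have : Real.log |1 - r| < -1 := by
      calc Real.log |1 - r| < Real.log (Real.exp (-1)) :=
        Real.log_lt_log habs0 hrabs
      _ = -1 := Real.log_exp _
    linarith
  have hlogδ : Real.log (1 / δ) = 2 * L := by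
    rw [hδabs, one_div, Real.log_inv, hL, one_div, Real.log_inv, sq,
      Real.log_mul habs0.ne' habs0.ne']
    ring
  -- the integrand
  set f : ℝ → ℝ := fun t => (1 - t ^ 2) ^ k * (1 - 2 * r * t + r ^ 2) ^ (-(2 * k + 2) / 2)
    with hfdef
  have hexp : -(2 * k + 2) / 2 = -(k + 1) := by ring
  -- D facts
  have hDeq : ∀ t : ℝ, 1 - 2 * r * t + r ^ 2 = δ + 2 * r * (1 - t) := by
    intro t; rw [hδdef]; ring
  have hDposδ : ∀ t : ℝ, t ≤ 1 → δ ≤ 1 - 2 * r * t + r ^ 2 := by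
    intro t ht; rw [hDeq]; nlinarith
  have hD0 : ∀ t : ℝ, t ≤ 1 → 0 < 1 - 2 * r * t + r ^ 2 := fun t ht =>
    lt_of_lt_of_le hδ0 (hDposδ t ht)
  -- factorization of f
  have hffact : ∀ t : ℝ, -1 ≤ t → t ≤ 1 →
      f t = (1 + t) ^ k * ((1 - t) ^ k * (1 - 2 * r * t + r ^ 2) ^ (-(k+1))) := by
    intro t ht1 ht2
    rw [hfdef]
    simp only
    rw [hexp, show (1 - t^2 : ℝ) = (1 + t) * (1 - t) by ring,
      Real.mul_rpow (by linarith) (by linarith), mul_assoc]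
  have hfnonneg : ∀ t : ℝ, -1 ≤ t → t ≤ 1 → 0 ≤ f t := by
    intro t ht1 ht2
    rw [hffact t ht1 ht2]
    have h2 : (0:ℝ) ≤ 1 + t := by linarith
    have h3 : (0:ℝ) ≤ 1 - t := by linarith
    exact mul_nonneg (Real.rpow_nonneg h2 _)
      (mul_nonneg (Real.rpow_nonneg h3 _) (Real.rpow_nonneg (hD0 t ht2).le _))
  have hfmeas : Measurable f := by rw [hfdef]; fun_prop
  -- bound functions
  set g1 : ℝ → ℝ := fun t => A * (t + 1) ^ k with hg1
  set g2 : ℝ → ℝ := fun t => A * (1 - t)⁻¹ with hg2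
  set g3 : ℝ → ℝ := fun t => (A * δ ^ (-(k+1))) * (1 - t) ^ k with hg3
  -- pointwise bounds
  have hb1 : ∀ t ∈ Set.Ioc (-1 : ℝ) 0, |f t| ≤ g1 t := by
    intro t ht
    obtain ⟨ht1, ht2⟩ := ht
    rw [abs_of_nonneg (hfnonneg t ht1.le (by linarith)), hffact t ht1.le (by linarith), hg1]
    simp only
    rw [show (t + 1 : ℝ) = 1 + t by ring, mul_comm A _]
    apply mul_le_mul_of_nonneg_left _ (Real.rpow_nonneg (by linarith) k)
    calc (1 - t) ^ k * (1 - 2 * r * t + r ^ 2) ^ (-(k+1))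
        ≤ A * 1 := by
          apply mul_le_mul
          · exact aux_A_bound k _ (by linarith) (by linarith)
          · apply Real.rpow_le_one_of_one_le_of_nonpos _ (by linarith)
            rw [hDeq]; nlinarith
          · exact Real.rpow_nonneg (hD0 t (by linarith)).le _
          · linarith
      _ = A := mul_one A
  have hb2 : ∀ t ∈ Set.Ioc (0 : ℝ) (1 - δ), |f t| ≤ g2 t := by
    intro t ht
    obtain ⟨ht1, ht2⟩ := ht
    have ht1' : (-1 : ℝ) ≤ t := by linarith
    have ht2' : t ≤ 1 := by linarith
    have htpos : 0 < 1 - t := by linarith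
    rw [abs_of_nonneg (hfnonneg t ht1' ht2'), hffact t ht1' ht2', hg2]
    simp only
    calc (1 + t) ^ k * ((1 - t) ^ k * (1 - 2 * r * t + r ^ 2) ^ (-(k+1)))
        ≤ A * ((1 - t) ^ k * (1 - t) ^ (-(k+1))) := by
          apply mul_le_mul
          · exact aux_A_bound k _ (by linarith) (by linarith)
          · apply mul_le_mul_of_nonneg_left _ (Real.rpow_nonneg htpos.le k)
            apply Real.rpow_le_rpow_of_nonpos htpos _ (by linarith)
            rw [hDeq]; nlinarith
          · exact mul_nonneg (Real.rpow_nonneg htpos.le _)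
              (Real.rpow_nonneg (hD0 t ht2').le _)
          · linarith
      _ = A * (1 - t)⁻¹ := by
          rw [← Real.rpow_add htpos, show k + -(k+1) = -1 by ring, Real.rpow_neg_one]
  have hb3 : ∀ t ∈ Set.Ioc (1 - δ : ℝ) 1, |f t| ≤ g3 t := by
    intro t ht
    obtain ⟨ht1, ht2⟩ := ht
    have ht1' : (-1 : ℝ) ≤ t := by linarith
    rw [abs_of_nonneg (hfnonneg t ht1' ht2), hffact t ht1' ht2, hg3]
    simp only
    rw [show A * δ ^ (-(k+1)) * (1 - t) ^ k = A * ((1-t)^k * δ ^ (-(k+1))) by ring]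
    apply mul_le_mul
    · exact aux_A_bound k _ (by linarith) (by linarith)
    · apply mul_le_mul_of_nonneg_left _ (Real.rpow_nonneg (by linarith) k)
      exact Real.rpow_le_rpow_of_nonpos hδ0 (hDposδ t ht2) (by linarith)
    · exact mul_nonneg (Real.rpow_nonneg (by linarith) _)
        (Real.rpow_nonneg (hD0 t ht2).le _)
    · linarith
  -- integrability of the bound functions
  have hg1int : IntervalIntegrable g1 volume (-1) 0 := by
    have := ((intervalIntegrable_rpow' (a := 0) (b := 1) hk).comp_add_right 1).const_mul A
    simpa using this
  have hg2int : IntervalIntegrable g2 volume 0 (1 - δ) := by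
    apply ContinuousOn.intervalIntegrable
    apply ContinuousOn.mul continuousOn_const
    apply ContinuousOn.inv₀ (by fun_prop)
    intro x hx
    rw [Set.uIcc_of_le (by linarith)] at hx
    have := hx.2
    intro h
    have : x = 1 := by linarith
    subst this
    linarith [hx.2]
  have hg3int : IntervalIntegrable g3 volume (1 - δ) 1 := by
    have h := ((intervalIntegrable_rpow' (a := 0) (b := δ) hk).comp_sub_left 1).symm
    norm_num at h
    exact h.const_mul _
  -- a.e. bounds on uIoc
  have hae1 : ∀ᵐ t ∂(volume.restrict (Set.uIoc (-1 : ℝ) 0)), ‖f t‖ ≤ g1 t := by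
    rw [Set.uIoc_of_le (by norm_num : (-1:ℝ) ≤ 0)]
    exact (ae_restrict_iff' measurableSet_Ioc).mpr (ae_of_all _ fun t ht => hb1 t ht)
  have hae2 : ∀ᵐ t ∂(volume.restrict (Set.uIoc (0 : ℝ) (1 - δ))), ‖f t‖ ≤ g2 t := by
    rw [Set.uIoc_of_le (by linarith : (0:ℝ) ≤ 1 - δ)]
    exact (ae_restrict_iff' measurableSet_Ioc).mpr (ae_of_all _ fun t ht => hb2 t ht)
  have hae3 : ∀ᵐ t ∂(volume.restrict (Set.uIoc (1 - δ : ℝ) 1)), ‖f t‖ ≤ g3 t := by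
    rw [Set.uIoc_of_le (by linarith : (1 - δ:ℝ) ≤ 1)]
    exact (ae_restrict_iff' measurableSet_Ioc).mpr (ae_of_all _ fun t ht => hb3 t ht)
  -- integrability of f on the pieces
  have hfint1 : IntervalIntegrable f volume (-1) 0 :=
    hg1int.mono_fun' (hfmeas.aestronglyMeasurable.restrict) hae1
  have hfint2 : IntervalIntegrable f volume 0 (1 - δ) :=
    hg2int.mono_fun' (hfmeas.aestronglyMeasurable.restrict) hae2
  have hfint3 : IntervalIntegrable f volume (1 - δ) 1 :=
    hg3int.mono_fun' (hfmeas.aestronglyMeasurable.restrict) hae3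
  -- values of the bound integrals
  have hg1val : ∫ t in (-1:ℝ)..0, g1 t = A / (k + 1) := by
    rw [hg1, intervalIntegral.integral_const_mul]
    rw [show (fun t : ℝ => (t + 1) ^ k) = (fun t : ℝ => ((fun x : ℝ => x ^ k) (t + 1)))
      from rfl, integral_comp_add_right (fun x : ℝ => x ^ k) 1]
    norm_num
    rw [integral_rpow (Or.inl hk), Real.one_rpow, Real.zero_rpow (by linarith)]
    norm_num
    ring
  have hg2val : ∫ t in (0:ℝ)..(1 - δ), g2 t = A * (2 * L) := by
    rw [hg2, intervalIntegral.integral_const_mul]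
    rw [show (fun t : ℝ => (1 - t)⁻¹) = (fun t : ℝ => ((fun x : ℝ => x⁻¹) (1 - t))) from rfl,
      integral_comp_sub_left (fun x : ℝ => x⁻¹) 1]
    norm_num
    rw [integral_inv (by rw [Set.uIcc_of_le hδ1.le]; rintro ⟨h1, h2⟩; linarith)]
    have : Real.log (1 / δ) = 2 * L := hlogδ
    rw [one_div, Real.log_inv] at this
    rw [Real.log_div one_ne_zero hδ0.ne', Real.log_one, zero_sub, this]
    try exact Or.inl rfl
  have hg3val : ∫ t in (1 - δ:ℝ)..1, g3 t = A / (k + 1) := by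
    rw [hg3, intervalIntegral.integral_const_mul, integral_one_sub_rpow k δ hk]
    have hone : δ ^ (-(k+1)) * δ ^ (k+1) = 1 := by
      rw [← Real.rpow_add hδ0, show -(k+1) + (k+1) = 0 by ring, Real.rpow_zero]
    rw [show A * δ ^ (-(k+1)) * (δ ^ (k+1) / (k+1)) =
      A * (δ ^ (-(k+1)) * δ ^ (k+1)) / (k+1) by ring, hone, mul_one]
  -- assemble
  have hsplit : Ikernel (2 * k + 2) k r =
      (∫ t in (-1:ℝ)..0, f t) + (∫ t in (0:ℝ)..(1 - δ), f t) + (∫ t in (1 - δ:ℝ)..1, f t) := by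
    have hIk : Ikernel (2 * k + 2) k r = ∫ t in (-1:ℝ)..1, f t := by
      rw [Ikernel, hfdef]
    rw [hIk]
    rw [intervalIntegral.integral_add_adjacent_intervals hfint1 hfint2,
      intervalIntegral.integral_add_adjacent_intervals (hfint1.trans hfint2) hfint3]
  have hn1 : |∫ t in (-1:ℝ)..0, f t| ≤ A / (k + 1) := by
    have := intervalIntegral.norm_integral_le_abs_of_norm_le hae1 hg1int
    rw [Real.norm_eq_abs] at this
    refine this.trans ?_
    rw [hg1val, abs_of_nonneg (div_nonneg hA0.le hk1.le)]
  have hn2 : |∫ t in (0:ℝ)..(1 - δ), f t| ≤ A * (2 * L) := by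
    have := intervalIntegral.norm_integral_le_abs_of_norm_le hae2 hg2int
    rw [Real.norm_eq_abs] at this
    refine this.trans ?_
    rw [hg2val, abs_of_nonneg (mul_nonneg hA0.le (by linarith))]
  have hn3 : |∫ t in (1 - δ:ℝ)..1, f t| ≤ A / (k + 1) := by
    have := intervalIntegral.norm_integral_le_abs_of_norm_le hae3 hg3int
    rw [Real.norm_eq_abs] at this
    refine this.trans ?_
    rw [hg3val, abs_of_nonneg (div_nonneg hA0.le hk1.le)]
  have htot : |Ikernel (2 * k + 2) k r| ≤ 2 * (A / (k + 1)) + A * (2 * L) := by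
    rw [hsplit]
    calc |(∫ t in (-1:ℝ)..0, f t) + (∫ t in (0:ℝ)..(1 - δ), f t) + (∫ t in (1 - δ:ℝ)..1, f t)|
        ≤ |(∫ t in (-1:ℝ)..0, f t) + (∫ t in (0:ℝ)..(1 - δ), f t)| + |∫ t in (1 - δ:ℝ)..1, f t| :=
          abs_add_le _ _
      _ ≤ |∫ t in (-1:ℝ)..0, f t| + |∫ t in (0:ℝ)..(1 - δ), f t| + |∫ t in (1 - δ:ℝ)..1, f t| :=
          add_le_add_left (abs_add_le _ _) _
      _ ≤ 2 * (A / (k + 1)) + A * (2 * L) := by linarith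
  refine htot.trans ?_
  have hApos : 0 < A / (k+1) := div_pos hA0 hk1
  have h1 : 2 * (A / (k + 1)) ≤ 2 * A / (k + 1) * L := by
    calc 2 * (A / (k+1)) = 2 * (A/(k+1)) * 1 := by ring
      _ ≤ 2 * (A/(k+1)) * L := by
          apply mul_le_mul_of_nonneg_left hL1
          positivity
      _ = 2 * A / (k+1) * L := by ring
  have h3 : (2 * A / (k + 1) + 2 * A) * L = 2 * A / (k+1) * L + 2 * A * L := by ring
  have h2 : A * (2 * L) = 2 * A * L := by ring
  linarith

end Aux

/-- Borderline case `γ = 2k+2`: logarithmic bound near `r = 1`. -/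
theorem Ikernel_log_bound :
    ∀ k : ℝ, k > -1 →
      ∃ C ε : ℝ, 0 < ε ∧ ∀ r : ℝ, 0 < r → |r - 1| < ε → r ≠ 1 →
        |Ikernel (2 * k + 2) k r| ≤ C * Real.log (1 / |1 - r|) := by
  intro k hk
  refine ⟨2 * max 1 (2 ^ k : ℝ) / (k + 1) + 2 * max 1 (2 ^ k : ℝ), Real.exp (-1),
    Real.exp_pos _, ?_⟩
  intro r hr0 hre hrne
  exact Ikernel_log_bound_aux k hk r hr0 hre hrne
end

section
/- For k > -1 and γ > 2k+2, the integral I_{γ,k}(r) = ∫_{-1}^1 (1-t²)^k (1-2rt+r²)^{-γ/2} dt satisfies |I_{γ,k}(r)| ≤ C_{γ,k} |1-r|^{-γ+2k+2} for r near 1, r ≠ 1. -/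
/-!
Write `1 - 2rt + r² = (1 - r)² + 2r(1 - t)`. The substitution `t ↦ -t` replaces `r` by `-r`, which
only enlarges this quadratic on `[0, 1]`, so `|I_{γ,k}(r)|` is at most twice the integral over
`[0, 1]`. There `(1 + t)^k` is bounded and, for `r ≥ 1/2`, the quadratic is at least `ε + s` with
`ε = (1 - r)²`, `s = 1 - t`. Everything thus reduces to
`∫₀¹ s^k (ε + s)^{-γ/2} ds = O(ε^{k+1-γ/2})`, obtained by splitting at `s = ε`.
-/

open Real

open Set MeasureTheory intervalIntegral

lemma intervalIntegrable_rpow_mul_add_rpow {ε k p a b : ℝ} (hε : 0 < ε) (hk : -1 < k)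
    (ha : 0 ≤ a) (hb : 0 ≤ b) :
    IntervalIntegrable (fun s => s ^ k * (ε + s) ^ p) volume a b := by
  refine (intervalIntegrable_rpow' hk).mul_continuousOn
    (ContinuousOn.rpow_const (by fun_prop) fun s hs => Or.inl ?_)
  have : 0 ≤ s := le_trans (le_min ha hb) hs.1
  positivity

/-- Split at `s = ε`: below it `(ε + s)⁻ᵖ ≤ ε⁻ᵖ`, above it `(ε + s)⁻ᵖ ≤ s⁻ᵖ`. -/
lemma integral_rpow_mul_add_rpow_neg_le {ε k p : ℝ} (hε : 0 < ε) (hε1 : ε ≤ 1) (hk : -1 < k)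
    (hkp : k + 1 < p) :
    ∫ s in (0 : ℝ)..1, s ^ k * (ε + s) ^ (-p) ≤
      (1 / (k + 1) + 1 / (p - k - 1)) * ε ^ (k + 1 - p) := by
  have hk1 : 0 < k + 1 := by linarith
  have hp : 0 ≤ p := by linarith
  have near : ∫ s in (0 : ℝ)..ε, s ^ k * (ε + s) ^ (-p) ≤ ε ^ (k + 1 - p) / (k + 1) := calc
    _ ≤ ∫ s in (0 : ℝ)..ε, ε ^ (-p) * s ^ k := by
      refine integral_mono_on hε.le (intervalIntegrable_rpow_mul_add_rpow hε hk le_rfl hε.le)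
        ((intervalIntegrable_rpow' hk).const_mul _) fun s hs => ?_
      rw [mul_comm]
      gcongr ?_ * _
      · exact rpow_nonneg hs.1 _
      · exact rpow_le_rpow_of_nonpos hε (by linarith [hs.1]) (by linarith)
    _ = ε ^ (k + 1 - p) / (k + 1) := by
      rw [intervalIntegral.integral_const_mul, integral_rpow (Or.inl hk), zero_rpow hk1.ne',
        sub_zero, mul_div_assoc', ← rpow_add hε]
      ring_nf
  have far : ∫ s in ε..1, s ^ k * (ε + s) ^ (-p) ≤ ε ^ (k + 1 - p) / (p - k - 1) := calc
    _ ≤ ∫ s in ε..1, s ^ (k - p) := by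
      refine integral_mono_on hε1 (intervalIntegrable_rpow_mul_add_rpow hε hk hε.le zero_le_one)
        (intervalIntegral.intervalIntegrable_rpow (Or.inr ?_)) fun s hs => ?_
      · rw [uIcc_of_le hε1]; exact fun h => (not_le.2 hε) h.1
      have hs0 : 0 < s := hε.trans_le hs.1
      rw [sub_eq_add_neg, rpow_add hs0]
      exact mul_le_mul_of_nonneg_left
        (rpow_le_rpow_of_nonpos hs0 (by linarith) (by linarith)) (rpow_nonneg hs0.le _)
    _ = (ε ^ (k + 1 - p) - 1) / (p - k - 1) := by
      rw [integral_rpow (Or.inr ⟨by linarith, ?_⟩), one_rpow, ← neg_div_neg_eq]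
      · ring_nf
      · rw [uIcc_of_le hε1]; exact fun h => (not_le.2 hε) h.1
    _ ≤ ε ^ (k + 1 - p) / (p - k - 1) := by gcongr <;> linarith
  rw [← integral_add_adjacent_intervals
    (intervalIntegrable_rpow_mul_add_rpow hε hk le_rfl hε.le)
    (intervalIntegrable_rpow_mul_add_rpow hε hk hε.le zero_le_one)]
  linarith [show (1 / (k + 1) + 1 / (p - k - 1)) * ε ^ (k + 1 - p)
    = ε ^ (k + 1 - p) / (k + 1) + ε ^ (k + 1 - p) / (p - k - 1) by ring]

lemma rpow_le_max_one_two_rpow {x : ℝ} (k : ℝ) (hx : x ∈ Icc 1 2) : x ^ k ≤ max 1 (2 ^ k) := by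
  rcases le_or_gt 0 k with hk | hk
  · exact (rpow_le_rpow (by linarith [hx.1]) hx.2 hk).trans (le_max_right _ _)
  · exact (rpow_le_one_of_one_le_of_nonpos hx.1 hk.le).trans (le_max_left _ _)

noncomputable def kernelIntegrand (γ k r t : ℝ) : ℝ :=
  (1 - t ^ 2) ^ k * (1 - 2 * r * t + r ^ 2) ^ (-γ / 2)

section kernelIntegrand

variable {γ k r t : ℝ}

lemma kernelIntegrand_comp_neg : kernelIntegrand γ k r (-t) = kernelIntegrand γ k (-r) t := by
  simp only [kernelIntegrand]
  ring_nf

lemma kernelIntegrand_nonneg (ht : t ∈ Icc (-1) 1) : 0 ≤ kernelIntegrand γ k r t := by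
  have h1 : 0 ≤ 1 - t ^ 2 := by nlinarith [ht.1, ht.2]
  have h2 : 0 ≤ 1 - 2 * r * t + r ^ 2 := by nlinarith [sq_nonneg (r - t)]
  exact mul_nonneg (rpow_nonneg h1 _) (rpow_nonneg h2 _)

lemma kernelIntegrand_neg_le (hr : 0 ≤ r) (hγ : 0 ≤ γ) (ht : t ∈ Icc 0 1)
    (hQ : 0 < 1 - 2 * r * t + r ^ 2) : kernelIntegrand γ k (-r) t ≤ kernelIntegrand γ k r t := by
  have h1 : 0 ≤ 1 - t ^ 2 := by nlinarith [ht.1, ht.2]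
  refine mul_le_mul_of_nonneg_left (rpow_le_rpow_of_nonpos hQ ?_ (by linarith)) (rpow_nonneg h1 _)
  nlinarith [ht.1]

lemma one_sub_sq_add_one_sub_pos (hr1 : r ≠ 1) (ht : t ≤ 1) : 0 < (1 - r) ^ 2 + (1 - t) := by
  have : 1 - r ≠ 0 := sub_ne_zero.2 (Ne.symm hr1)
  have : 0 < (1 - r) ^ 2 := by positivity
  linarith

lemma one_sub_sq_add_one_sub_le (hr : 1 / 2 ≤ r) (ht : t ≤ 1) :
    (1 - r) ^ 2 + (1 - t) ≤ 1 - 2 * r * t + r ^ 2 := by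
  nlinarith

lemma one_sub_two_mul_add_sq_pos (hr : 1 / 2 ≤ r) (hr1 : r ≠ 1) (ht : t ≤ 1) :
    0 < 1 - 2 * r * t + r ^ 2 :=
  (one_sub_sq_add_one_sub_pos hr1 ht).trans_le (one_sub_sq_add_one_sub_le hr ht)

lemma kernelIntegrand_eq_mul (ht : t ∈ Icc (-1) 1) :
    kernelIntegrand γ k r t = (1 - t) ^ k * ((1 + t) ^ k * (1 - 2 * r * t + r ^ 2) ^ (-γ / 2)) := by
  rw [kernelIntegrand, show 1 - t ^ 2 = (1 - t) * (1 + t) by ring,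
    mul_rpow (by linarith [ht.2]) (by linarith [ht.1]), mul_assoc]

lemma kernelIntegrand_le (hr : 1 / 2 ≤ r) (hr1 : r ≠ 1) (hγ : 0 ≤ γ) (ht : t ∈ Icc 0 1) :
    kernelIntegrand γ k r t ≤
      max 1 (2 ^ k) * ((1 - t) ^ k * ((1 - r) ^ 2 + (1 - t)) ^ (-γ / 2)) := by
  have h1t : 0 ≤ 1 - t := by linarith [ht.2]
  have hQ := one_sub_sq_add_one_sub_pos hr1 ht.2
  have hlow := one_sub_sq_add_one_sub_le hr ht.2
  calc kernelIntegrand γ k r t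
        = (1 + t) ^ k * ((1 - t) ^ k * (1 - 2 * r * t + r ^ 2) ^ (-γ / 2)) := by
        rw [kernelIntegrand_eq_mul ⟨by linarith [ht.1], ht.2⟩, mul_left_comm]
    _ ≤ _ := mul_le_mul (rpow_le_max_one_two_rpow k ⟨by linarith [ht.1], by linarith [ht.2]⟩)
        (mul_le_mul_of_nonneg_left (rpow_le_rpow_of_nonpos hQ hlow (by linarith))
          (rpow_nonneg h1t _))
        (mul_nonneg (rpow_nonneg h1t _) (rpow_nonneg (hQ.le.trans hlow) _)) (by positivity)

lemma intervalIntegrable_kernelIntegrand (hk : -1 < k)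
    (hQ : ∀ t ∈ Icc (0 : ℝ) 1, 1 - 2 * r * t + r ^ 2 ≠ 0) :
    IntervalIntegrable (kernelIntegrand γ k r) volume 0 1 := by
  have hsing : IntervalIntegrable (fun t : ℝ => (1 - t) ^ k) volume 0 1 := by
    simpa using ((intervalIntegrable_rpow' hk).comp_sub_left 1 (a := 0) (b := 1)).symm
  have hreg : ContinuousOn (fun t : ℝ => (1 + t) ^ k * (1 - 2 * r * t + r ^ 2) ^ (-γ / 2))
      (uIcc 0 1) := by
    rw [uIcc_of_le zero_le_one]
    refine ContinuousOn.mul (ContinuousOn.rpow_const (by fun_prop) fun t ht => Or.inl ?_)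
      (ContinuousOn.rpow_const (by fun_prop) fun t ht => Or.inl (hQ t ht))
    linarith [ht.1]
  refine (hsing.mul_continuousOn hreg).congr fun t ht => ?_
  rw [uIoc_of_le zero_le_one] at ht
  exact (kernelIntegrand_eq_mul ⟨by linarith [ht.1], ht.2⟩).symm

end kernelIntegrand

section Ikernel

variable {γ k r : ℝ}

lemma Ikernel_eq_integral_add (hint : IntervalIntegrable (kernelIntegrand γ k r) volume 0 1)
    (hint_neg : IntervalIntegrable (kernelIntegrand γ k (-r)) volume 0 1) :
    Ikernel γ k r = (∫ t in (0 : ℝ)..1, kernelIntegrand γ k r t) +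
      ∫ t in (0 : ℝ)..1, kernelIntegrand γ k (-r) t := by
  have hflip : (fun t => kernelIntegrand γ k r (-t)) = kernelIntegrand γ k (-r) :=
    funext fun _ => kernelIntegrand_comp_neg
  have hint_left : IntervalIntegrable (kernelIntegrand γ k r) volume (-1) 0 := by
    rw [IntervalIntegrable.iff_comp_neg, hflip, neg_neg, neg_zero]
    exact hint_neg.symm
  rw [← hflip, integral_comp_neg, neg_zero, add_comm,
    integral_add_adjacent_intervals hint_left hint]
  rfl

lemma integral_kernelIntegrand_le (hk : -1 < k) (hγ : 2 * k + 2 < γ) (hr : 1 / 2 ≤ r)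
    (hr' : r ≤ 3 / 2) (hr1 : r ≠ 1) :
    ∫ t in (0 : ℝ)..1, kernelIntegrand γ k r t ≤
      max 1 (2 ^ k) * (1 / (k + 1) + 1 / (γ / 2 - k - 1)) * ((1 - r) ^ 2) ^ (k + 1 - γ / 2) := by
  set ε := (1 - r) ^ 2
  have hε : 0 < ε := by simpa using one_sub_sq_add_one_sub_pos hr1 le_rfl
  have hε1 : ε ≤ 1 := by nlinarith
  have hmajorant :
      IntervalIntegrable (fun t => (1 - t) ^ k * (ε + (1 - t)) ^ (-γ / 2)) volume 0 1 := by
    simpa using ((intervalIntegrable_rpow_mul_add_rpow (p := -γ / 2) hε hk le_rfl zero_le_one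
      ).comp_sub_left 1).symm
  calc ∫ t in (0 : ℝ)..1, kernelIntegrand γ k r t
      ≤ ∫ t in (0 : ℝ)..1, max 1 (2 ^ k) * ((1 - t) ^ k * (ε + (1 - t)) ^ (-γ / 2)) :=
        integral_mono_on zero_le_one (intervalIntegrable_kernelIntegrand hk
          fun t ht => (one_sub_two_mul_add_sq_pos hr hr1 ht.2).ne')
          (hmajorant.const_mul _) fun t ht => kernelIntegrand_le hr hr1 (by linarith) ht
    _ = max 1 (2 ^ k) * ∫ s in (0 : ℝ)..1, s ^ k * (ε + s) ^ (-(γ / 2)) := by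
        rw [intervalIntegral.integral_const_mul,
          integral_comp_sub_left (fun s => s ^ k * (ε + s) ^ (-γ / 2)), neg_div]
        norm_num
    _ ≤ max 1 (2 ^ k) * ((1 / (k + 1) + 1 / (γ / 2 - k - 1)) * ε ^ (k + 1 - γ / 2)) := by
        gcongr
        exact integral_rpow_mul_add_rpow_neg_le hε hε1 hk (by linarith)
    _ = _ := by ring

lemma abs_Ikernel_le (hk : -1 < k) (hγ : 2 * k + 2 < γ) (hr : 1 / 2 ≤ r) (hr' : r ≤ 3 / 2)
    (hr1 : r ≠ 1) :
    |Ikernel γ k r| ≤ 2 * max 1 (2 ^ k) * (1 / (k + 1) + 1 / (γ / 2 - k - 1)) *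
      ((1 - r) ^ 2) ^ (k + 1 - γ / 2) := by
  have hQ (t : ℝ) (ht : t ∈ Icc (0 : ℝ) 1) := one_sub_two_mul_add_sq_pos hr hr1 ht.2
  have hQ_neg (t : ℝ) (ht : t ∈ Icc (0 : ℝ) 1) : 1 - 2 * -r * t + (-r) ^ 2 ≠ 0 := by
    nlinarith [ht.1]
  have hint := intervalIntegrable_kernelIntegrand (γ := γ) hk fun t ht => (hQ t ht).ne'
  have hint_neg := intervalIntegrable_kernelIntegrand (γ := γ) hk hQ_neg
  have hnonneg : 0 ≤ ∫ t in (0 : ℝ)..1, kernelIntegrand γ k (-r) t :=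
    integral_nonneg zero_le_one fun t ht => kernelIntegrand_nonneg ⟨by linarith [ht.1], ht.2⟩
  have hle : ∫ t in (0 : ℝ)..1, kernelIntegrand γ k (-r) t ≤
      ∫ t in (0 : ℝ)..1, kernelIntegrand γ k r t :=
    integral_mono_on zero_le_one hint_neg hint fun t ht =>
      kernelIntegrand_neg_le (by linarith) (by linarith) ht (hQ t ht)
  rw [Ikernel_eq_integral_add hint hint_neg, abs_of_nonneg (by linarith)]
  linarith [integral_kernelIntegrand_le hk hγ hr hr' hr1]

end Ikernel

/-- Case `γ > 2k+2`: power bound near `r = 1`. -/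
theorem Ikernel_power_bound :
    ∀ γ k : ℝ, k > -1 → γ > 2 * k + 2 →
      ∃ C ε : ℝ, 0 < ε ∧ ∀ r : ℝ, 0 < r → |r - 1| < ε → r ≠ 1 →
        |Ikernel γ k r| ≤ C * |1 - r| ^ (-γ + 2 * k + 2) := by
  intro γ k hk hγ
  refine ⟨2 * max 1 (2 ^ k) * (1 / (k + 1) + 1 / (γ / 2 - k - 1)), 1 / 2, by norm_num,
    fun r _ hr hr1 => ?_⟩
  obtain ⟨hr_lo, hr_hi⟩ := abs_sub_lt_iff.1 hr
  have hpow : |1 - r| ^ (-γ + 2 * k + 2) = ((1 - r) ^ 2) ^ (k + 1 - γ / 2) := by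
    rw [← sq_abs, ← rpow_natCast_mul (abs_nonneg _)]
    congr 1
    push_cast
    ring
  rw [hpow]
  exact abs_Ikernel_le hk hγ (by linarith) (by linarith) hr1
end

section
/- Let α > -1, δ > 0, 0 < ρ₀ < ρ ≤ 1, 0 ≤ σ, and β = α+1 or β = α+2 with β - σ - 1 > -1. Define I(x) = e^{-x/2} ∫_0^δ Z_{β,x}(ρ e^{-t}) ρ e^{-t} t^σ dt, where Z_{β,x}(w) = (1-w)^{-β-1} e^{-xw/(1-w)}. Then there is a constant C = C(β,σ,δ,ρ₀), independent of ρ, such that |I(x)| ≤ C x^{σ-β} for all x > 0. -/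
/-!
Put `w = ρ e^{-t}` and `u = (1 - w)⁻¹ - 1/2`. Then `e^{-x/2} Z_{β,x}(w) = (1 - w)^{-β-1} e^{-xu}`
and `|du/dt| = w (u + 1/2)²`. Since `1 + t ≤ e^t` gives `t ≤ (1 + δ)(1 - w)`, and `u + 1/2` is
comparable to `u` because `u ≥ 1/2`, the integrand is at most a constant times
`|du/dt| u^{β-σ-1} e^{-xu}`. As `t ↦ u` is injective, the integral is then bounded by the Gamma
integral `∫_0^∞ u^{β-σ-1} e^{-xu} du = Γ(β-σ) x^{σ-β}`.
-/

open Real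

/-- The Laguerre generating function `Z_{β,x}(w) = (1-w)^{-β-1} e^{-xw/(1-w)}`. -/
noncomputable def Zfun (β x w : ℝ) : ℝ :=
  (1 - w) ^ (-β - 1) * Real.exp (-x * w / (1 - w))

open Set MeasureTheory Function

lemma rpow_le_max_one_two_rpow_mul_rpow {a b p : ℝ} (ha : 0 < a) (hab : a ≤ b) (hb : b ≤ 2 * a) :
    b ^ p ≤ max 1 (2 ^ p) * a ^ p := by
  rcases le_total 0 p with hp | hp
  · calc b ^ p ≤ (2 * a) ^ p := rpow_le_rpow (by linarith) hb hp
      _ = 2 ^ p * a ^ p := mul_rpow zero_le_two ha.le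
      _ ≤ max 1 (2 ^ p) * a ^ p := by gcongr; exact le_max_right _ _
  · calc b ^ p ≤ a ^ p := rpow_le_rpow_of_nonpos ha hab hp
      _ ≤ max 1 (2 ^ p) * a ^ p := le_mul_of_one_le_left (by positivity) (le_max_left _ _)

lemma le_one_add_mul_one_sub_exp_neg (t : ℝ) : t ≤ (1 + t) * (1 - exp (-t)) := by
  have : (1 + t) * exp (-t) ≤ 1 := by
    rw [exp_neg, ← div_eq_mul_inv, div_le_one (exp_pos t)]
    linarith [add_one_le_exp t]
  linarith

lemma le_one_add_mul_one_sub_mul_exp_neg {ρ δ t : ℝ} (hρ : ρ ≤ 1) (ht : 0 ≤ t) (htδ : t ≤ δ) :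
    t ≤ (1 + δ) * (1 - ρ * exp (-t)) := by
  have hexp : exp (-t) ≤ 1 := exp_le_one_iff.2 (by linarith)
  calc t ≤ (1 + t) * (1 - exp (-t)) := le_one_add_mul_one_sub_exp_neg t
    _ ≤ (1 + δ) * (1 - ρ * exp (-t)) := by
      gcongr
      · linarith
      · nlinarith [exp_pos (-t)]

lemma abs_setIntegral_le_of_le_abs_deriv_mul_comp {s t : Set ℝ} {f f' g h : ℝ → ℝ}
    (hs : MeasurableSet s) (hf' : ∀ x ∈ s, HasDerivWithinAt f (f' x) s x) (hf : InjOn f s)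
    (hst : MapsTo f s t) (ht : MeasurableSet t) (hg : IntegrableOn g t)
    (hg0 : ∀ v ∈ t, 0 ≤ g v) (hh : ∀ x ∈ s, |h x| ≤ |f' x| * g (f x)) :
    |∫ x in s, h x| ≤ ∫ v in t, g v := by
  have hint : IntegrableOn (fun x => |f' x| * g (f x)) s := by
    simpa only [smul_eq_mul] using
      (integrableOn_image_iff_integrableOn_abs_deriv_smul hs hf' hf g).1 (hg.mono_set hst.image_subset)
  calc |∫ x in s, h x| ≤ ∫ x in s, |h x| := abs_integral_le_integral_abs
    _ ≤ ∫ x in s, |f' x| * g (f x) :=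
        integral_mono_of_nonneg (ae_of_all _ fun _ => abs_nonneg _) hint
          ((ae_restrict_iff' hs).2 (ae_of_all _ hh))
    _ = ∫ v in f '' s, g v := by
        simpa only [smul_eq_mul] using (integral_image_eq_integral_abs_deriv_smul hs hf' hf g).symm
    _ ≤ ∫ v in t, g v :=
        setIntegral_mono_set hg (ae_restrict_of_forall_mem ht hg0) hst.image_subset.eventuallyLE

lemma integrableOn_rpow_mul_exp_neg_mul_Ioi {s x : ℝ} (hs : -1 < s) (hx : 0 < x) :
    IntegrableOn (fun v : ℝ => v ^ s * exp (-(x * v))) (Ioi 0) := by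
  simpa only [rpow_one, neg_mul] using integrableOn_rpow_mul_exp_neg_mul_rpow hs one_pos hx

lemma integral_rpow_sub_one_mul_exp_neg_mul_Ioi {a x : ℝ} (ha : 0 < a) (hx : 0 < x) :
    ∫ v in Ioi (0 : ℝ), v ^ (a - 1) * exp (-(x * v)) = Gamma a * x ^ (-a) := by
  rw [integral_rpow_mul_exp_neg_mul_Ioi ha hx, one_div, inv_rpow hx.le, rpow_neg hx.le, mul_comm]

/-- The paper's `u = 1/2 + w/(1-w)`, written so that `u + 1/2 = (1 - w)⁻¹`. -/
noncomputable def Zexponent (w : ℝ) : ℝ := (1 - w)⁻¹ - 1 / 2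

lemma Zfun_nonneg (β x : ℝ) {w : ℝ} (hw : w < 1) : 0 ≤ Zfun β x w :=
  mul_nonneg (rpow_nonneg (sub_nonneg.2 hw.le) _) (exp_pos _).le

lemma exp_neg_half_mul_Zfun (β x : ℝ) {w : ℝ} (hw : w ≠ 1) :
    exp (-x / 2) * Zfun β x w = (1 - w) ^ (-β - 1) * exp (-(x * Zexponent w)) := by
  have h : 1 - w ≠ 0 := sub_ne_zero.2 hw.symm
  rw [Zfun, Zexponent, mul_left_comm, ← exp_add]
  congr 2
  field_simp
  ring

lemma half_le_Zexponent {w : ℝ} (h0 : 0 ≤ w) (h1 : w < 1) : 1 / 2 ≤ Zexponent w := by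
  have : 1 ≤ (1 - w)⁻¹ := (one_le_inv₀ (by linarith)).2 (by linarith)
  rw [Zexponent]
  linarith

lemma hasDerivAt_Zexponent {w : ℝ} (hw : w ≠ 1) : HasDerivAt Zexponent ((1 - w) ^ 2)⁻¹ w := by
  have h : 1 - w ≠ 0 := sub_ne_zero.2 hw.symm
  exact ((((hasDerivAt_id w).const_sub 1).inv h).sub_const (1 / 2)).congr_deriv (by simp)

lemma hasDerivAt_Zexponent_mul_exp_neg (ρ t : ℝ) (h : ρ * exp (-t) ≠ 1) :
    HasDerivAt (fun s => Zexponent (ρ * exp (-s)))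
      (-(ρ * exp (-t) / (1 - ρ * exp (-t)) ^ 2)) t := by
  have := (hasDerivAt_Zexponent h).comp t (((hasDerivAt_neg t).exp).const_mul ρ)
  exact this.congr_deriv (by ring)

lemma Zexponent_mul_exp_neg_injective {ρ : ℝ} (hρ : ρ ≠ 0) :
    Injective fun t => Zexponent (ρ * exp (-t)) := by
  intro s t h
  simpa only [Zexponent, sub_left_inj, inv_inj, sub_right_inj, mul_right_inj' hρ, exp_eq_exp,
    neg_inj] using h

lemma abs_exp_neg_half_mul_Zfun_mul_rpow_le {β σ x w τ c : ℝ} (hσ : 0 ≤ σ) (hw0 : 0 < w)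
    (hw1 : w < 1) (hτ0 : 0 ≤ τ) (hτ : τ ≤ c * (1 - w)) :
    |exp (-x / 2) * (Zfun β x w * w * τ ^ σ)| ≤
      w / (1 - w) ^ 2 * (c ^ σ * max 1 (2 ^ (β - σ - 1)) *
        (Zexponent w ^ (β - σ - 1) * exp (-(x * Zexponent w)))) := by
  set u := Zexponent w
  have h1w : 0 < 1 - w := sub_pos.2 hw1
  have hc : 0 ≤ c := nonneg_of_mul_nonneg_left (hτ0.trans hτ) h1w
  have hu : 1 / 2 ≤ u := half_le_Zexponent hw0.le hw1
  have hy : (1 - w)⁻¹ = u + 1 / 2 := by simp [u, Zexponent]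
  have hpow : (1 - w) ^ (-β - 1) * (1 - w) ^ σ = (u + 1 / 2) ^ (β - σ - 1) * ((1 - w) ^ 2)⁻¹ := by
    rw [← hy, ← rpow_add h1w, inv_rpow h1w.le, ← rpow_neg h1w.le, ← rpow_natCast,
      ← rpow_neg h1w.le, ← rpow_add h1w]
    congr 1
    push_cast
    ring
  have hτσ : τ ^ σ ≤ c ^ σ * (1 - w) ^ σ := by
    rw [← mul_rpow hc h1w.le]
    exact rpow_le_rpow hτ0 hτ hσ
  have hshift : (u + 1 / 2) ^ (β - σ - 1) ≤ max 1 (2 ^ (β - σ - 1)) * u ^ (β - σ - 1) :=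
    rpow_le_max_one_two_rpow_mul_rpow (by linarith) (by linarith) (by linarith)
  rw [abs_of_nonneg (by have := Zfun_nonneg β x hw1; positivity)]
  calc exp (-x / 2) * (Zfun β x w * w * τ ^ σ)
      = (1 - w) ^ (-β - 1) * τ ^ σ * (w * exp (-(x * u))) := by
        linear_combination (w * τ ^ σ) * exp_neg_half_mul_Zfun β x hw1.ne
    _ ≤ (1 - w) ^ (-β - 1) * (c ^ σ * (1 - w) ^ σ) * (w * exp (-(x * u))) := by gcongr
    _ = c ^ σ * (u + 1 / 2) ^ (β - σ - 1) * (w / (1 - w) ^ 2 * exp (-(x * u))) := by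
        linear_combination (c ^ σ * (w * exp (-(x * u)))) * hpow
    _ ≤ c ^ σ * (max 1 (2 ^ (β - σ - 1)) * u ^ (β - σ - 1)) *
          (w / (1 - w) ^ 2 * exp (-(x * u))) := by gcongr
    _ = _ := by ring

/-- For `β = α+1` or `β = α+2`, `0 ≤ σ` with `β - σ - 1 > -1`, the quantity
`I(x) = e^{-x/2} ∫_0^δ Z_{β,x}(ρ e^{-t}) ρ e^{-t} t^σ dt` satisfies
`|I(x)| ≤ C x^{σ-β}` with `C = C(β,σ,δ,ρ₀)` independent of `ρ ∈ (ρ₀,1]`. -/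
theorem Zfun_integral_bound :
    ∀ α δ ρ₀ σ β : ℝ, α > -1 → 0 < δ → 0 < ρ₀ → 0 ≤ σ →
      (β = α + 1 ∨ β = α + 2) → β - σ - 1 > -1 →
      ∃ C : ℝ, ∀ ρ : ℝ, ρ₀ < ρ → ρ ≤ 1 → ∀ x : ℝ, 0 < x →
        |Real.exp (-x / 2) *
            ∫ t in (0 : ℝ)..δ,
              Zfun β x (ρ * Real.exp (-t)) * (ρ * Real.exp (-t)) * t ^ σ| ≤
          C * x ^ (σ - β) := by
  intro α δ ρ₀ σ β _ hδ hρ₀ hσ _ hβσ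
  set K := (1 + δ) ^ σ * max 1 (2 ^ (β - σ - 1))
  refine ⟨K * Gamma (β - σ), fun ρ hρ₀ρ hρ1 x hx => ?_⟩
  have hρ : 0 < ρ := hρ₀.trans hρ₀ρ
  have hw : ∀ t ∈ Ioc 0 δ, 0 < ρ * exp (-t) ∧ ρ * exp (-t) < 1 := fun t ht =>
    ⟨by positivity, by nlinarith [exp_lt_one_iff.2 (neg_lt_zero.2 ht.1), exp_pos (-t)]⟩
  have hbound := abs_setIntegral_le_of_le_abs_deriv_mul_comp (s := Ioc 0 δ) (t := Ioi 0)
    (g := fun v => K * (v ^ (β - σ - 1) * exp (-(x * v))))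
    (h := fun t => exp (-x / 2) * (Zfun β x (ρ * exp (-t)) * (ρ * exp (-t)) * t ^ σ))
    measurableSet_Ioc
    (fun t ht => (hasDerivAt_Zexponent_mul_exp_neg ρ t (hw t ht).2.ne).hasDerivWithinAt)
    (Zexponent_mul_exp_neg_injective hρ.ne').injOn
    (fun t ht => one_half_pos.trans_le (half_le_Zexponent (hw t ht).1.le (hw t ht).2))
    measurableSet_Ioi
    ((integrableOn_rpow_mul_exp_neg_mul_Ioi (by linarith) hx).const_mul K)
    (fun v hv => by have : (0 : ℝ) < v := hv; positivity)
    (fun t ht => by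
      rw [abs_neg, abs_of_nonneg (a := ρ * exp (-t) / (1 - ρ * exp (-t)) ^ 2) (by positivity)]
      exact abs_exp_neg_half_mul_Zfun_mul_rpow_le hσ (hw t ht).1 (hw t ht).2 ht.1.le
        (le_one_add_mul_one_sub_mul_exp_neg hρ1 ht.1.le ht.2))
  rw [intervalIntegral.integral_of_le hδ.le, ← integral_const_mul]
  refine hbound.trans (le_of_eq ?_)
  rw [integral_const_mul, show β - σ - 1 = (β - σ) - 1 by ring,
    integral_rpow_sub_one_mul_exp_neg_mul_Ioi (by linarith) hx, neg_sub]
  ring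
end

section
/- Fix σ > 0 and α ≥ 0, and let K_σ(x) = x^{2(σ-α-1)} on (0,∞). Then for nonnegative measurable F, the generalized Euclidean convolution satisfies K_σ ⋆ F(x) = c_α ∫_0^∞ y^{2σ} I_{2(1+α-σ), α-1/2}(x/y) F(y) dy/y, where I_{γ,k}(r) = ∫_{-1}^1 (1-t²)^k (1-2rt+r²)^{-γ/2} dt and ⋆ denotes convolution with respect to the measure y^{2α+1} dy using the generalized translation τ^E_x. -/
open Real MeasureTheory

/-- The constant `c_α = Γ(α+1)/(π^{1/2} Γ(α+1/2))`. -/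
noncomputable def cAlpha (α : ℝ) : ℝ :=
  Real.Gamma (α + 1) / (Real.sqrt Real.pi * Real.Gamma (α + 1 / 2))

/-- The generalized Euclidean translation `τ^E_x F(y)`. -/
noncomputable def euclideanTranslation (α x : ℝ) (F : ℝ → ℝ) (y : ℝ) : ℝ :=
  cAlpha α * ∫ θ in (0 : ℝ)..Real.pi,
    F (Real.sqrt (x ^ 2 + y ^ 2 - 2 * x * y * Real.cos θ)) * Real.sin θ ^ (2 * α)

/-- The generalized Euclidean convolution
`F ⋆ G(x) = ∫_0^∞ τ^E_x F(y) G(y) y^{2α+1} dy`. -/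
noncomputable def euclideanConvolution (α : ℝ) (F G : ℝ → ℝ) (x : ℝ) : ℝ :=
  ∫ y in Set.Ioi (0 : ℝ), euclideanTranslation α x F y * G y * y ^ (2 * α + 1)

lemma cos_image_Ioo : Real.cos '' Set.Ioo 0 π = Set.Ioo (-1 : ℝ) 1 := by
  ext t
  constructor
  · rintro ⟨θ, hθ, rfl⟩
    have h1 : Real.cos θ < Real.cos 0 :=
      Real.strictAntiOn_cos ⟨le_refl 0, Real.pi_pos.le⟩
        ⟨hθ.1.le, hθ.2.le⟩ hθ.1
    have h2 : Real.cos π < Real.cos θ :=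
      Real.strictAntiOn_cos ⟨hθ.1.le, hθ.2.le⟩ ⟨Real.pi_pos.le, le_refl π⟩ hθ.2
    simp only [Real.cos_zero, Real.cos_pi] at h1 h2
    exact ⟨h2, h1⟩
  · rintro ⟨h1, h2⟩
    refine ⟨Real.arccos t, ⟨Real.arccos_pos.2 h2, ?_⟩, Real.cos_arccos h1.le h2.le⟩
    rw [Real.arccos]
    linarith [Real.neg_pi_div_two_lt_arcsin.2 h1]

lemma change_var (g : ℝ → ℝ) :
    ∫ t in Set.Ioo (-1 : ℝ) 1, g t = ∫ θ in Set.Ioo (0 : ℝ) π, Real.sin θ * g (Real.cos θ) := by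
  rw [← cos_image_Ioo]
  rw [integral_image_eq_integral_abs_deriv_smul measurableSet_Ioo
    (fun θ _ => (Real.hasDerivAt_cos θ).hasDerivWithinAt) (Real.injOn_cos.mono Set.Ioo_subset_Icc_self) g]
  refine setIntegral_congr_fun measurableSet_Ioo fun θ hθ => ?_
  have hs : 0 ≤ Real.sin θ := (Real.sin_pos_of_pos_of_lt_pi hθ.1 hθ.2).le
  rw [abs_neg, abs_of_nonneg hs, smul_eq_mul]

lemma inner_eq (σ α x y : ℝ) (hx : 0 < x) (hy : 0 < y) :
    (∫ θ in (0 : ℝ)..π,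
        Real.sqrt (x ^ 2 + y ^ 2 - 2 * x * y * Real.cos θ) ^ (2 * (σ - α - 1)) *
          Real.sin θ ^ (2 * α)) =
      y ^ (2 * (σ - α - 1)) * Ikernel (2 * (1 + α - σ)) (α - 1 / 2) (x / y) := by
  have hIoo : Ikernel (2 * (1 + α - σ)) (α - 1 / 2) (x / y) =
      ∫ t in Set.Ioo (-1 : ℝ) 1,
        (1 - t ^ 2) ^ (α - 1 / 2) * (1 - 2 * (x / y) * t + (x / y) ^ 2) ^ (-(2 * (1 + α - σ)) / 2) := by
    rw [Ikernel, intervalIntegral.integral_of_le (by norm_num), integral_Ioc_eq_integral_Ioo]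
  rw [hIoo, change_var, intervalIntegral.integral_of_le Real.pi_pos.le,
    integral_Ioc_eq_integral_Ioo, ← integral_const_mul]
  refine setIntegral_congr_fun measurableSet_Ioo fun θ hθ => ?_
  have hs : 0 < Real.sin θ := Real.sin_pos_of_pos_of_lt_pi hθ.1 hθ.2
  set t := Real.cos θ with htdef
  have ht2 : Real.sin θ ^ 2 = 1 - t ^ 2 := Real.sin_sq θ
  have hB : 0 < 1 - 2 * (x / y) * t + (x / y) ^ 2 := by
    have : 1 - 2 * (x / y) * t + (x / y) ^ 2 = (x / y - t) ^ 2 + (1 - t ^ 2) := by ring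
    rw [this, ← ht2]
    positivity
  have hA : x ^ 2 + y ^ 2 - 2 * x * y * t = y ^ 2 * (1 - 2 * (x / y) * t + (x / y) ^ 2) := by
    field_simp
    ring
  -- LHS factor: sqrt A ^ (2p) = A ^ p
  have hA0 : (0:ℝ) ≤ x ^ 2 + y ^ 2 - 2 * x * y * t := by rw [hA]; positivity
  have h1 : Real.sqrt (x ^ 2 + y ^ 2 - 2 * x * y * t) ^ (2 * (σ - α - 1)) =
      (x ^ 2 + y ^ 2 - 2 * x * y * t) ^ (σ - α - 1) := by
    rw [Real.sqrt_eq_rpow, ← Real.rpow_mul hA0]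
    congr 1
    ring
  have h2 : (x ^ 2 + y ^ 2 - 2 * x * y * t) ^ (σ - α - 1) =
      y ^ (2 * (σ - α - 1)) * (1 - 2 * (x / y) * t + (x / y) ^ 2) ^ (σ - α - 1) := by
    rw [hA, Real.mul_rpow (sq_nonneg y) hB.le, ← Real.rpow_natCast y 2,
      ← Real.rpow_mul hy.le]
    norm_num
  have h3 : Real.sin θ ^ (2 * α) =
      Real.sin θ * (1 - t ^ 2) ^ (α - 1 / 2) := by
    rw [← ht2, ← Real.rpow_natCast (Real.sin θ) 2, ← Real.rpow_mul hs.le]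
    rw [show ((2:ℕ):ℝ) * (α - 1/2) = 2 * α - 1 by push_cast; ring]
    rw [show (2:ℝ) * α = 1 + (2 * α - 1) by ring, Real.rpow_add hs, Real.rpow_one]
    ring_nf
  have hexp : -(2 * (1 + α - σ)) / 2 = σ - α - 1 := by ring
  rw [h1, h2, h3, hexp]
  ring

/-- For `σ > 0`, `α ≥ 0`, `F ≥ 0` measurable and `x > 0`, with
`K_σ(y) = y^{2(σ-α-1)}`:
`K_σ ⋆ F(x) = c_α ∫_0^∞ y^{2σ} I_{2(1+α-σ), α-1/2}(x/y) F(y) dy/y`. -/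
theorem power_kernel_convolution :
    ∀ σ α : ℝ, 0 < σ → 0 ≤ α → ∀ F : ℝ → ℝ, (∀ y, 0 ≤ F y) → Measurable F →
      ∀ x : ℝ, 0 < x →
        euclideanConvolution α (fun y => y ^ (2 * (σ - α - 1))) F x =
          cAlpha α * ∫ y in Set.Ioi (0 : ℝ),
            y ^ (2 * σ) * Ikernel (2 * (1 + α - σ)) (α - 1 / 2) (x / y) * F y / y := by
  intro σ α hσ hα F hF hFm x hx
  rw [euclideanConvolution, ← integral_const_mul]
  refine setIntegral_congr_fun measurableSet_Ioi fun y hy => ?_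
  have hy : (0:ℝ) < y := hy
  rw [euclideanTranslation, inner_eq σ α x y hx hy]
  have hpow : y ^ (2 * (σ - α - 1)) * y ^ (2 * α + 1) = y ^ (2 * σ) / y := by
    rw [← Real.rpow_add hy, div_eq_mul_inv, ← Real.rpow_neg_one y, ← Real.rpow_add hy]
    ring_nf
  calc cAlpha α * (y ^ (2 * (σ - α - 1)) * Ikernel (2 * (1 + α - σ)) (α - 1 / 2) (x / y)) *
        F y * y ^ (2 * α + 1)
      = cAlpha α * ((y ^ (2 * (σ - α - 1)) * y ^ (2 * α + 1)) *
          Ikernel (2 * (1 + α - σ)) (α - 1 / 2) (x / y) * F y) := by ring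
    _ = cAlpha α * (y ^ (2 * σ) * Ikernel (2 * (1 + α - σ)) (α - 1 / 2) (x / y) * F y / y) := by
        rw [hpow]; ring
end
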